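/- arXiv:1709.06494 — 14 statements merged into one kernel-verified Lean document; each statement's English description precedes it below -/
import Mathlib

section
/- Let X be a locally compact Hausdorff topological space and let J be a reflexive and transitive relation on X. Suppose that for all compact sets K₁, K₂ ⊆ X the causal emerald J⁺(K₁) ∩ J⁻(K₂) := {y ∈ X | (∃ x ∈ K₁, J x y) ∧ (∃ z ∈ K₂, J y z)} is compact. Then the graph of J is a closed subset of X × X. -/
/-- If causal emeralds of a reflexive transitive relation `J` on a locally compact
Hausdorff space are compact, then the graph of `J` is closed. -/
theorem causal_emeralds_compact_implies_closed
    {X : Type*} [TopologicalSpace X] [LocallyCompactSpace X] [T2Space X]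
    (J : X → X → Prop)
    (hrefl : ∀ x, J x x)
    (htrans : ∀ x y z, J x y → J y z → J x z)
    (hemerald : ∀ K₁ K₂ : Set X, IsCompact K₁ → IsCompact K₂ →
      IsCompact {y : X | (∃ x ∈ K₁, J x y) ∧ (∃ z ∈ K₂, J y z)}) :
    IsClosed {p : X × X | J p.1 p.2} := by
  refine isClosed_of_closure_subset ?_
  rintro ⟨x, y⟩ hp
  -- Step 1: for every compact neighborhood K of x, there is s ∈ K with J s y.
  have step1 : ∀ K : Set X, IsCompact K → K ∈ nhds x → ∃ s ∈ K, J s y := by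
    intro K hK hKx
    obtain ⟨L, hL, hLy⟩ := exists_compact_mem_nhds y
    set A : Set X := {w : X | (∃ s ∈ K, J s w) ∧ (∃ t ∈ L, J w t)} with hA
    have hAc : IsClosed A := (hemerald K L hK hL).isClosed
    have hyA : y ∈ A := by
      rw [← hAc.closure_eq]
      rw [mem_closure_iff]
      intro V hV hyV
      have hU : (interior K ×ˢ (V ∩ interior L)) ∈ nhds (x, y) := by
        rw [nhds_prod_eq]
        apply Filter.prod_mem_prod
        · exact isOpen_interior.mem_nhds (mem_interior_iff_mem_nhds.mpr hKx)
        · exact Filter.inter_mem (hV.mem_nhds hyV)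
            (isOpen_interior.mem_nhds (mem_interior_iff_mem_nhds.mpr hLy))
      have := mem_closure_iff_nhds.mp hp _ hU
      obtain ⟨⟨s, t⟩, ⟨hsK, htV, htL⟩, hst⟩ := this
      exact ⟨t, htV, ⟨s, interior_subset hsK, hst⟩, ⟨t, interior_subset htL, hrefl t⟩⟩
    obtain ⟨⟨s, hsK, hsy⟩, _⟩ := hyA
    exact ⟨s, hsK, hsy⟩
  -- Step 2: directed family of compact sets
  let ι := {K : Set X // IsCompact K ∧ K ∈ nhds x}
  obtain ⟨K₀, hK₀, hK₀x⟩ := exists_compact_mem_nhds x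
  have : Nonempty ι := ⟨⟨K₀, hK₀, hK₀x⟩⟩
  let D : ι → Set X := fun K =>
    {w : X | (∃ s ∈ K.1, J s w) ∧ (∃ t ∈ ({y} : Set X), J w t)} ∩ K.1
  have hDc : ∀ i, IsCompact (D i) := fun i =>
    ((hemerald i.1 {y} i.2.1 isCompact_singleton).inter_right i.2.1.isClosed)
  have hDcl : ∀ i, IsClosed (D i) := fun i =>
    (hemerald i.1 {y} i.2.1 isCompact_singleton).isClosed.inter i.2.1.isClosed
  have hDne : ∀ i, (D i).Nonempty := by
    rintro ⟨K, hK, hKx⟩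
    obtain ⟨s, hsK, hsy⟩ := step1 K hK hKx
    exact ⟨s, ⟨⟨s, hsK, hrefl s⟩, ⟨y, rfl, hsy⟩⟩, hsK⟩
  have hdir : Directed (· ⊇ ·) D := by
    rintro i j
    refine ⟨⟨i.1 ∩ j.1, i.2.1.inter j.2.1, Filter.inter_mem i.2.2 j.2.2⟩, ?_, ?_⟩
    · rintro w ⟨⟨⟨s, ⟨hsi, _⟩, hsw⟩, ht⟩, hwi, _⟩
      exact ⟨⟨⟨s, hsi, hsw⟩, ht⟩, hwi⟩
    · rintro w ⟨⟨⟨s, ⟨_, hsj⟩, hsw⟩, ht⟩, _, hwj⟩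
      exact ⟨⟨⟨s, hsj, hsw⟩, ht⟩, hwj⟩
  obtain ⟨w, hw⟩ :=
    IsCompact.nonempty_iInter_of_directed_nonempty_isCompact_isClosed D hdir hDne hDc hDcl
  simp only [Set.mem_iInter] at hw
  have hwx : w = x := by
    by_contra hne
    obtain ⟨K, hKc, hxK, hKsub⟩ := exists_compact_subset isOpen_compl_singleton
      (fun h => hne (Set.mem_singleton_iff.mp h).symm : x ∈ ({w} : Set X)ᶜ)
    have := hw ⟨K, hKc, mem_nhds_iff.mpr ⟨interior K, interior_subset, isOpen_interior, hxK⟩⟩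
    exact hKsub this.2 rfl
  obtain ⟨_, ⟨t, ht, hwt⟩⟩ := (hw ⟨K₀, hK₀, hK₀x⟩).1
  rw [Set.mem_singleton_iff] at ht
  subst ht
  rw [← hwx]
  exact hwt
end

section
/- Let X be a topological space, J a transitive relation on X, and I a relation on X such that: the graph of I is open in X × X; I x y implies J x y for all x, y; and I is past-dense. Then the graph of J is closed in X × X if and only if for every p ∈ X both J⁺(p) = {y | J p y} and J⁻(p) = {x | J x p} are closed subsets of X. -/
/-- For a transitive relation `J` with an open past-dense subrelation `I`, the graph of
`J` is closed iff all futures `J⁺(p)` and pasts `J⁻(p)` are closed. -/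
theorem closed_graph_iff_closed_futures_and_pasts
    {X : Type*} [TopologicalSpace X]
    (J I : X → X → Prop)
    (htrans : ∀ x y z, J x y → J y z → J x z)
    (hIopen : IsOpen {p : X × X | I p.1 p.2})
    (hIJ : ∀ x y, I x y → J x y)
    (hpastdense : ∀ p : X, ∀ U ∈ nhds p, ∃ q ∈ U, I q p) :
    IsClosed {p : X × X | J p.1 p.2} ↔
      ∀ p : X, IsClosed {y : X | J p y} ∧ IsClosed {x : X | J x p} := by
  constructor
  · intro h p
    exact ⟨h.preimage (Continuous.prodMk_right p),
      h.preimage (continuous_id.prodMk continuous_const)⟩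
  · intro h
    rw [← isOpen_compl_iff, isOpen_iff_mem_nhds]
    rintro ⟨x, y⟩ hxy
    simp only [Set.mem_compl_iff, Set.mem_setOf_eq] at hxy
    have hU : {a | J a y}ᶜ ∈ nhds x := ((h y).2.isOpen_compl).mem_nhds hxy
    obtain ⟨q, hq, hIqx⟩ := hpastdense x _ hU
    have h1 : IsOpen {a | I q a} := hIopen.preimage (Continuous.prodMk_right q)
    have h2 : IsOpen {b | ¬ J q b} := (h q).1.isOpen_compl
    have hmem : {a | I q a} ×ˢ {b | ¬ J q b} ∈ nhds (x, y) :=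
      (h1.prod h2).mem_nhds ⟨hIqx, hq⟩
    filter_upwards [hmem] with p hp
    obtain ⟨ha, hb⟩ := hp
    exact fun hJ => hb (htrans _ _ _ (hIJ _ _ ha) hJ)
end

section
/- Let X be a topological space and J a transitive relation on X. Then the interior of the graph of J in X × X is the graph of a transitive relation: if (p, q) and (q, r) both belong to the interior of {(x, y) ∈ X × X | J x y}, then so does (p, r). -/
/-- The interior of the graph of a transitive relation is transitive. -/
theorem interior_graph_transitive
    {X : Type*} [TopologicalSpace X]
    (J : X → X → Prop)
    (htrans : ∀ x y z, J x y → J y z → J x z) :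
    ∀ p q r : X,
      (p, q) ∈ interior {x : X × X | J x.1 x.2} →
      (q, r) ∈ interior {x : X × X | J x.1 x.2} →
      (p, r) ∈ interior {x : X × X | J x.1 x.2} := by
  intro p q r hpq hqr
  rw [mem_interior_iff_mem_nhds, nhds_prod_eq, Filter.mem_prod_iff] at hpq hqr ⊢
  obtain ⟨U, hU, V, hV, hUV⟩ := hpq
  obtain ⟨U', hU', V', hV', hUV'⟩ := hqr
  refine ⟨U, hU, V', hV', ?_⟩
  rintro ⟨a, b⟩ ⟨ha, hb⟩
  exact htrans a q b (hUV (show (a,q) ∈ U ×ˢ V from ⟨ha, mem_of_mem_nhds hV⟩)) (hUV' (show (q,b) ∈ U' ×ˢ V' from ⟨mem_of_mem_nhds hU', hb⟩))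
end

section
/- Let X be a topological space, J a transitive relation on X, and I a relation on X whose graph is open in X × X, such that I x y implies J x y, and which is both future-dense and past-dense. Define D_f := {(p, q) | q ∈ closure {y | J p y}} and D_p := {(p, q) | p ∈ closure {x | J x q}}. Then D_f = D_p if and only if both D_f and D_p coincide with the closure of the graph of J in X × X. -/
/-- Reflectivity: `D_f = D_p` iff both coincide with the closure of the graph of `J`. -/
theorem reflectivity_iff_Df_eq_Dp
    {X : Type*} [TopologicalSpace X]
    (J I : X → X → Prop)
    (htrans : ∀ x y z, J x y → J y z → J x z)
    (hIopen : IsOpen {p : X × X | I p.1 p.2})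
    (hIJ : ∀ x y, I x y → J x y)
    (hfuturedense : ∀ p : X, ∀ U ∈ nhds p, ∃ q ∈ U, I p q)
    (hpastdense : ∀ p : X, ∀ U ∈ nhds p, ∃ q ∈ U, I q p) :
    ({pq : X × X | pq.2 ∈ closure {y : X | J pq.1 y}} =
        {pq : X × X | pq.1 ∈ closure {x : X | J x pq.2}}) ↔
      ({pq : X × X | pq.2 ∈ closure {y : X | J pq.1 y}} =
          closure {p : X × X | J p.1 p.2} ∧
        {pq : X × X | pq.1 ∈ closure {x : X | J x pq.2}} =
          closure {p : X × X | J p.1 p.2}) := by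
  constructor
  · intro h
    -- D_f ⊆ closure(graph J)
    have hDfJ : {pq : X × X | pq.2 ∈ closure {y : X | J pq.1 y}} ⊆
        closure {p : X × X | J p.1 p.2} := by
      rintro ⟨p, q⟩ hq
      rw [mem_closure_iff]
      intro o ho hpq
      rcases isOpen_prod_iff.mp ho p q hpq with ⟨U, V, hU, hV, hpU, hqV, hUV⟩
      rcases hpastdense p U (hU.mem_nhds hpU) with ⟨p', hp'U, hIp'p⟩
      rcases mem_closure_iff.mp hq V hV hqV with ⟨y, hyV, hJpy⟩
      exact ⟨(p', y), hUV ⟨hp'U, hyV⟩, htrans _ _ _ (hIJ _ _ hIp'p) hJpy⟩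
    -- D_p ⊆ closure(graph J)
    have hDpJ : {pq : X × X | pq.1 ∈ closure {x : X | J x pq.2}} ⊆
        closure {p : X × X | J p.1 p.2} := by
      rintro ⟨p, q⟩ hp
      rw [mem_closure_iff]
      intro o ho hpq
      rcases isOpen_prod_iff.mp ho p q hpq with ⟨U, V, hU, hV, hpU, hqV, hUV⟩
      rcases hfuturedense q V (hV.mem_nhds hqV) with ⟨q', hq'V, hIqq'⟩
      rcases mem_closure_iff.mp hp U hU hpU with ⟨x, hxU, hJxq⟩
      exact ⟨(x, q'), hUV ⟨hxU, hq'V⟩, htrans _ _ _ hJxq (hIJ _ _ hIqq')⟩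
    -- closure(graph J) ⊆ D_f (uses h)
    have hJDf : closure {p : X × X | J p.1 p.2} ⊆
        {pq : X × X | pq.2 ∈ closure {y : X | J pq.1 y}} := by
      rintro ⟨p, q⟩ hpq
      simp only [Set.mem_setOf_eq]
      rw [mem_closure_iff]
      intro V hV hqV
      rcases hfuturedense q V (hV.mem_nhds hqV) with ⟨q'', hq''V, hIqq''⟩
      have hA : IsOpen {z : X | I z q''} :=
        hIopen.preimage (Continuous.prodMk continuous_id continuous_const)
      have hDp : p ∈ closure {x : X | J x q''} := by
        rw [mem_closure_iff]
        intro U hU hpU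
        have hne : ((U ×ˢ {z : X | I z q''}) ∩ {p : X × X | J p.1 p.2}).Nonempty :=
          mem_closure_iff.mp hpq _ (hU.prod hA) ⟨hpU, hIqq''⟩
        rcases hne with ⟨⟨w, z⟩, ⟨hwU, hzA⟩, hJwz⟩
        exact ⟨w, hwU, htrans _ _ _ hJwz (hIJ _ _ hzA)⟩
      have hmem : (p, q'') ∈ {pq : X × X | pq.2 ∈ closure {y : X | J pq.1 y}} := by
        rw [h]; exact hDp
      exact mem_closure_iff.mp hmem V hV hq''V
    -- closure(graph J) ⊆ D_p (uses h)
    have hJDp : closure {p : X × X | J p.1 p.2} ⊆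
        {pq : X × X | pq.1 ∈ closure {x : X | J x pq.2}} := by
      rintro ⟨p, q⟩ hpq
      simp only [Set.mem_setOf_eq]
      rw [mem_closure_iff]
      intro U hU hpU
      rcases hpastdense p U (hU.mem_nhds hpU) with ⟨p'', hp''U, hIp''p⟩
      have hB : IsOpen {z : X | I p'' z} :=
        hIopen.preimage (Continuous.prodMk continuous_const continuous_id)
      have hDf : q ∈ closure {y : X | J p'' y} := by
        rw [mem_closure_iff]
        intro V hV hqV
        have hne : (({z : X | I p'' z} ×ˢ V) ∩ {p : X × X | J p.1 p.2}).Nonempty :=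
          mem_closure_iff.mp hpq _ (hB.prod hV) ⟨hIp''p, hqV⟩
        rcases hne with ⟨⟨w, y⟩, ⟨hwB, hyV⟩, hJwy⟩
        exact ⟨y, hyV, htrans _ _ _ (hIJ _ _ hwB) hJwy⟩
      have hmem : (p'', q) ∈ {pq : X × X | pq.1 ∈ closure {x : X | J x pq.2}} := by
        rw [← h]; exact hDf
      exact mem_closure_iff.mp hmem U hU hp''U
    exact ⟨Set.Subset.antisymm hDfJ hJDf, Set.Subset.antisymm hDpJ hJDp⟩
  · rintro ⟨h1, h2⟩; rw [h1, h2]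
end

section
/- Let X be a topological space and let I, J be relations on X such that: the graph of I is open in X × X; I is future-dense; I x y implies J x y; and for all x, y, z, J x y together with I y z implies I x z. Then the relation D_f := {(p, q) | q ∈ closure {y | J p y}} is transitive: if q ∈ closure J⁺(p) and r ∈ closure J⁺(q), then r ∈ closure J⁺(p). -/
/-- Transitivity of the relation `D_f = {(p,q) | q ∈ closure J⁺(p)}` when the open
future-dense relation `I` satisfies `I ⊆ J` and `J ∘ I ⊆ I`. -/
theorem Df_transitive
    {X : Type*} [TopologicalSpace X]
    (J I : X → X → Prop)
    (hIopen : IsOpen {p : X × X | I p.1 p.2})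
    (hfuturedense : ∀ p : X, ∀ U ∈ nhds p, ∃ q ∈ U, I p q)
    (hIJ : ∀ x y, I x y → J x y)
    (hJI : ∀ x y z, J x y → I y z → I x z) :
    ∀ p q r : X, q ∈ closure {y : X | J p y} → r ∈ closure {y : X | J q y} →
      r ∈ closure {y : X | J p y} := by
  intro p q r hq hr
  -- sections of the open graph are open
  have hsec : ∀ w : X, IsOpen {a : X | I a w} := by
    intro w
    have : Continuous fun a : X => (a, w) := by continuity
    exact hIopen.preimage this
  rw [mem_closure_iff]
  intro W hW hrW
  -- find w ∈ W with I r w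
  obtain ⟨w, hwW, hIrw⟩ := hfuturedense r W (hW.mem_nhds hrW)
  -- V = {a | I a w} is an open nbhd of r
  have hVopen := hsec w
  have hrV : r ∈ {a : X | I a w} := hIrw
  -- find y ∈ V with J q y
  rw [mem_closure_iff] at hr
  obtain ⟨y, hyV, hJqy⟩ := hr _ hVopen hrV
  have hIqw : I q w := hJI q y w hJqy hyV
  -- V' = {a | I a w} contains q; find z with J p z
  rw [mem_closure_iff] at hq
  obtain ⟨z, hzV, hJpz⟩ := hq _ hVopen hIqw
  have hIpw : I p w := hJI p z w hJpz hzV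
  exact ⟨w, hwW, hIJ p w hIpw⟩
end

section
/- Let X be a topological space and let I, J be relations on X such that: the graph of I is open in X × X; I is future-dense; and for all x, y, z, J x y together with I y z implies J x z. Then for every subset S ⊆ X, writing A := J⁺(S) = {y | ∃ s ∈ S, J s y}, one has closure (interior A) = closure A and frontier (interior A) = frontier A. -/
/-- For any set `S`, the causal future `J⁺(S)` satisfies
`closure (interior J⁺(S)) = closure J⁺(S)` and equality of frontiers, whenever there is
an open future-dense relation `I` with `J ∘ I ⊆ J`. -/
theorem closure_interior_causal_future
    {X : Type*} [TopologicalSpace X]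
    (J I : X → X → Prop)
    (hIopen : IsOpen {p : X × X | I p.1 p.2})
    (hfuturedense : ∀ p : X, ∀ U ∈ nhds p, ∃ q ∈ U, I p q)
    (hJI : ∀ x y z, J x y → I y z → J x z) :
    ∀ S : Set X,
      closure (interior {y : X | ∃ s ∈ S, J s y}) = closure {y : X | ∃ s ∈ S, J s y} ∧
      frontier (interior {y : X | ∃ s ∈ S, J s y}) = frontier {y : X | ∃ s ∈ S, J s y} := by
  intro S
  set A := {y : X | ∃ s ∈ S, J s y} with hA
  have hsub : A ⊆ closure (interior A) := by
    intro y hy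
    obtain ⟨s, hs, hJsy⟩ := hy
    rw [mem_closure_iff_nhds]
    intro U hU
    obtain ⟨q, hqU, hIyq⟩ := hfuturedense y U hU
    refine ⟨q, hqU, ?_⟩
    have hopen : IsOpen {z : X | I y z} := by
      have : {z : X | I y z} = Prod.mk y ⁻¹' {p : X × X | I p.1 p.2} := rfl
      rw [this]
      exact hIopen.preimage (Continuous.prodMk_right y)
    have hsubA : {z : X | I y z} ⊆ A := fun z hz => ⟨s, hs, hJI s y z hJsy hz⟩
    exact interior_maximal hsubA hopen hIyq
  have hcl : closure (interior A) = closure A := by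
    apply subset_antisymm (closure_mono interior_subset)
    calc closure A ⊆ closure (closure (interior A)) := closure_mono hsub
      _ = closure (interior A) := closure_closure
  refine ⟨hcl, ?_⟩
  rw [frontier, frontier, hcl, interior_interior]
end

section
/- Let X be a topological space and let I be a transitive relation on X whose graph is open in X × X. If S ⊆ X is nonempty and compact and every point of S lies in I⁺(S), i.e. for every p ∈ S there exists q ∈ S with I q p, then there exists p ∈ S with I p p. -/
/-- If a nonempty compact set `S` satisfies `S ⊆ I⁺(S)` for an open transitive
relation `I`, then some point of `S` satisfies `I p p`. -/
theorem compact_subset_chronological_future_violates_chronology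
    {X : Type*} [TopologicalSpace X]
    (I : X → X → Prop)
    (htrans : ∀ x y z, I x y → I y z → I x z)
    (hopen : IsOpen {p : X × X | I p.1 p.2})
    (S : Set X) (hne : S.Nonempty) (hcomp : IsCompact S)
    (h : ∀ p ∈ S, ∃ q ∈ S, I q p) :
    ∃ p ∈ S, I p p := by
  classical
  -- slices are open
  have hslice : ∀ q : X, IsOpen {x : X | I q x} := fun q =>
    hopen.preimage (Continuous.prodMk_right q)
  -- cover S by slices indexed by points of S
  obtain ⟨T, hTS, hTfin0, hcover⟩ := hcomp.elim_finite_subcover_image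
    (fun q (_ : q ∈ S) => hslice q)
    (by
      intro p hp
      obtain ⟨q, hq, hIq⟩ := h p hp
      exact Set.mem_iUnion₂.mpr ⟨q, hq, hIq⟩)
  -- T is a finite subset of S such that every point of S is in some slice
  have hmem : ∀ p ∈ S, ∃ q ∈ T, I q p := by
    intro p hp
    have := hcover hp
    simpa using this
  -- T is nonempty
  obtain ⟨p₀, hp₀⟩ := hne
  obtain ⟨q₀, hq₀T, _⟩ := hmem p₀ hp₀
  -- build self map on T
  have hTfin : T.Finite := hTfin0
  choose f hfT hfI using fun (q : X) (hq : q ∈ T) => hmem q (hTS hq)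
  -- iterate
  let F : hTfin.toFinset → hTfin.toFinset := fun q =>
    ⟨f q (hTfin.mem_toFinset.mp q.2), hTfin.mem_toFinset.mpr
      (hfT q (hTfin.mem_toFinset.mp q.2))⟩
  have hFI : ∀ q : hTfin.toFinset, I (F q).1 q.1 := fun q =>
    hfI q (hTfin.mem_toFinset.mp q.2)
  have hiter : ∀ (k : ℕ) (q : hTfin.toFinset), I (F^[k+1] q).1 q.1 := by
    intro k
    induction k with
    | zero => intro q; simpa using hFI q
    | succ n ih =>
      intro q
      have h1 : I (F^[n+2] q).1 (F q).1 := by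
        have := ih (F q)
        rw [← Function.iterate_succ_apply] at this
        exact this
      exact htrans _ _ _ h1 (hFI q)
  -- finiteness gives a repeat
  have : ¬ Function.Injective (fun n : ℕ => F^[n] ⟨q₀, hTfin.mem_toFinset.mpr hq₀T⟩) :=
    not_injective_infinite_finite _
  rw [Function.not_injective_iff] at this
  obtain ⟨m, n, heq, hne'⟩ := this
  rcases lt_or_gt_of_ne hne' with hlt | hlt
  · set t := F^[m] ⟨q₀, hTfin.mem_toFinset.mpr hq₀T⟩ with ht
    have key : F^[n - m] t = t := by
      rw [ht, ← Function.iterate_add_apply, Nat.sub_add_cancel hlt.le]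
      exact heq.symm
    have hk : n - m = (n - m - 1) + 1 := by omega
    refine ⟨t.1, hTS (hTfin.mem_toFinset.mp t.2), ?_⟩
    have := hiter (n - m - 1) t
    rw [← hk, key] at this
    exact this
  · set t := F^[n] ⟨q₀, hTfin.mem_toFinset.mpr hq₀T⟩ with ht
    have key : F^[m - n] t = t := by
      rw [ht, ← Function.iterate_add_apply, Nat.sub_add_cancel hlt.le]
      exact heq
    have hk : m - n = (m - n - 1) + 1 := by omega
    refine ⟨t.1, hTS (hTfin.mem_toFinset.mp t.2), ?_⟩
    have := hiter (m - n - 1) t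
    rw [← hk, key] at this
    exact this
end

section
/- Let V be a real topological vector space and C ⊆ V a convex cone, i.e. C is convex and s • y ∈ C for all real s > 0 and y ∈ C. Let F : V → ℝ satisfy: 0 ≤ F y for all y ∈ C; F (s • y) = s * F y for all s > 0 and y ∈ C; and t * F y + (1 - t) * F w ≤ F (t • y + (1 - t) • w) for all y, w ∈ C and t ∈ [0, 1]. If 0 < F y₁ for some y₁ ∈ C, then 0 < F y for every y ∈ C with y ∈ interior (C ∪ {0}). -/
/-!
Pushing `y` slightly away from `y₁` gives points `z = y + t • (y - y₁)` still in `C ∪ {0}`, and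
`y` lies strictly between `y₁` and `z`. For `y ≠ y₁` this line passes through `0` at most once, so
`z` can be taken in `C`, and concavity gives `F y ≥ s F y₁ + (1 - s) F z > 0` for some `s ∈ (0, 1)`.
-/

open Filter Topology Set

section

variable {V : Type*} [AddCommGroup V] [Module ℝ V]

theorem eventually_nhdsGT_add_smul_ne {v : V} (hv : v ≠ 0) (y w : V) :
    ∀ᶠ t in 𝓝[>] (0 : ℝ), y + t • v ≠ w := by
  have hsub : {t : ℝ | y + t • v = w}.Subsingleton := fun t ht t' ht' =>
    smul_left_injective ℝ hv (add_left_cancel (ht.trans ht'.symm))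
  exact hsub.finite.eventually_cofinite_notMem.filter_mono
    ((nhdsGT_le_nhdsNE 0).trans (nhdsNE_le_cofinite 0))

theorem eventually_nhdsGT_add_smul_mem_of_mem_interior [TopologicalSpace V]
    [ContinuousAdd V] [ContinuousSMul ℝ V] {S : Set V} {y : V} (hy : y ∈ interior S) (v : V) :
    ∀ᶠ t in 𝓝[>] (0 : ℝ), y + t • v ∈ S := by
  have hlim : Tendsto (fun t : ℝ => y + t • v) (𝓝 0) (𝓝 y) :=
    (by fun_prop : Continuous fun t : ℝ => y + t • v).tendsto' 0 y (by simp)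
  exact nhdsWithin_le_nhds (hlim (mem_interior_iff_mem_nhds.mp hy))

theorem mem_openSegment_add_smul_sub {t : ℝ} (ht : 0 < t) (x y : V) :
    y ∈ openSegment ℝ x (y + t • (y - x)) := by
  have h1t : 1 + t ≠ 0 := by positivity
  refine ⟨t / (1 + t), 1 / (1 + t), by positivity, by positivity, by field_simp; ring, ?_⟩
  match_scalars <;> field_simp
  ring

theorem pos_of_mem_openSegment {C : Set V} {F : V → ℝ} (hnn : ∀ y ∈ C, 0 ≤ F y)
    (hconc : ∀ y ∈ C, ∀ w ∈ C, ∀ t : ℝ, t ∈ Icc (0 : ℝ) 1 →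
      t * F y + (1 - t) * F w ≤ F (t • y + (1 - t) • w))
    {x z y : V} (hx : x ∈ C) (hz : z ∈ C) (hFx : 0 < F x) (hy : y ∈ openSegment ℝ x z) :
    0 < F y := by
  obtain ⟨a, b, ha, hb, hab, rfl⟩ := hy
  obtain rfl : b = 1 - a := by linarith
  have hconc_ab := hconc x hx z hz a ⟨ha.le, by linarith⟩
  nlinarith [hnn z hz]

end

theorem finsler_positive_on_interior_general
    {V : Type*} [AddCommGroup V] [Module ℝ V] [TopologicalSpace V]
    [IsTopologicalAddGroup V] [ContinuousSMul ℝ V]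
    (C : Set V)
    (F : V → ℝ)
    (hnn : ∀ y ∈ C, 0 ≤ F y)
    (hconc : ∀ y ∈ C, ∀ w ∈ C, ∀ t : ℝ, t ∈ Set.Icc (0:ℝ) 1 →
      t * F y + (1 - t) * F w ≤ F (t • y + (1 - t) • w))
    (y₁ : V) (hy₁ : y₁ ∈ C) (hFy₁ : 0 < F y₁) :
    ∀ y ∈ C, y ∈ interior (C ∪ {0}) → 0 < F y := by
  intro y _ hy
  obtain rfl | hne := eq_or_ne y y₁
  · exact hFy₁
  obtain ⟨t, hz, hz0, ht⟩ := ((eventually_nhdsGT_add_smul_mem_of_mem_interior hy (y - y₁)).and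
    ((eventually_nhdsGT_add_smul_ne (sub_ne_zero.mpr hne) y 0).and self_mem_nhdsWithin)).exists
  exact pos_of_mem_openSegment hnn hconc hy₁ (hz.resolve_right hz0) hFy₁
    (mem_openSegment_add_smul_sub ht y₁ y)

/-- A nonnegative, positively homogeneous, concave function on a convex cone of a real
topological vector space which is positive somewhere on the cone is positive at every
point of the cone lying in the interior of `C ∪ {0}`. -/
theorem finsler_positive_on_interior
    {V : Type*} [AddCommGroup V] [Module ℝ V] [TopologicalSpace V]
    [IsTopologicalAddGroup V] [ContinuousSMul ℝ V]
    (C : Set V) (hconv : Convex ℝ C)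
    (hcone : ∀ (s : ℝ) (y : V), 0 < s → y ∈ C → s • y ∈ C)
    (F : V → ℝ)
    (hnn : ∀ y ∈ C, 0 ≤ F y)
    (hhom : ∀ (s : ℝ) (y : V), 0 < s → y ∈ C → F (s • y) = s * F y)
    (hconc : ∀ y ∈ C, ∀ w ∈ C, ∀ t : ℝ, t ∈ Set.Icc (0:ℝ) 1 →
      t * F y + (1 - t) * F w ≤ F (t • y + (1 - t) • w))
    (y₁ : V) (hy₁ : y₁ ∈ C) (hFy₁ : 0 < F y₁) :
    ∀ y ∈ C, y ∈ interior (C ∪ {0}) → 0 < F y :=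
  finsler_positive_on_interior_general C F hnn hconc y₁ hy₁ hFy₁
end

section
/- Let V be a finite-dimensional real inner product space, C ⊆ V a proper cone and F a Finsler function on C. Then for every p ∈ C^o the set W p := {w ∈ ℝ | 0 ≤ w ∧ ∀ y ∈ C, ⟪p, y⟫ + w * F y ≤ 0} is nonempty and bounded above, and the reverse Cauchy–Schwarz inequality holds: for every y ∈ C and every p ∈ C^o, ⟪p, y⟫ + F^o p * F y ≤ 0, where F^o p = sSup (W p). -/
/-- The polar cone of `C`. -/
def polarConeSet {V : Type*} [NormedAddCommGroup V] [InnerProductSpace ℝ V]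
    (C : Set V) : Set V :=
  {p : V | p ≠ 0 ∧ ∀ y ∈ C, (inner ℝ p y : ℝ) ≤ 0}

/-- The set whose supremum defines the polar Finsler function `F^o p`. -/
def polarWSet {V : Type*} [NormedAddCommGroup V] [InnerProductSpace ℝ V]
    (C : Set V) (F : V → ℝ) (p : V) : Set ℝ :=
  {w : ℝ | 0 ≤ w ∧ ∀ y ∈ C, (inner ℝ p y : ℝ) + w * F y ≤ 0}

/-!
`W p` is the set of `w ≥ 0` satisfying a family of closed linear constraints. It contains `0`
because `p` is polar to `C`, and a single `y₁ ∈ C` with `F y₁ > 0` bounds it by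
`-⟪p, y₁⟫ / F y₁`. Being closed, nonempty and bounded above, it contains its supremum `F^o p`,
which is the reverse Cauchy–Schwarz inequality.
-/

section PolarWSet

variable {V : Type*} [NormedAddCommGroup V] [InnerProductSpace ℝ V] {C : Set V} {F : V → ℝ}
  {p : V}

theorem zero_mem_polarWSet (hp : p ∈ polarConeSet C) : (0 : ℝ) ∈ polarWSet C F p :=
  ⟨le_rfl, fun y hy => by simpa using hp.2 y hy⟩

theorem bddAbove_polarWSet {y₁ : V} (hy₁ : y₁ ∈ C) (hFy₁ : 0 < F y₁) :
    BddAbove (polarWSet C F p) := by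
  refine ⟨-inner ℝ p y₁ / F y₁, fun w hw => ?_⟩
  rw [le_div_iff₀ hFy₁]
  linarith [hw.2 y₁ hy₁]

variable (C F p) in
theorem isClosed_polarWSet : IsClosed (polarWSet C F p) := by
  simp only [polarWSet, Set.ofPred_and, Set.ofPred_forall]
  exact (isClosed_le continuous_const continuous_id).inter <|
    isClosed_iInter fun y => isClosed_iInter fun _ =>
      isClosed_le (by fun_prop) continuous_const

end PolarWSet

theorem reverse_cauchy_schwarz_general
    {V : Type*} [NormedAddCommGroup V] [InnerProductSpace ℝ V]
    (C : Set V)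
    (F : V → ℝ)
    (hFpos : ∃ y₁ ∈ C, 0 < F y₁) :
    (∀ p ∈ polarConeSet C, (polarWSet C F p).Nonempty ∧ BddAbove (polarWSet C F p)) ∧
    (∀ y ∈ C, ∀ p ∈ polarConeSet C,
      (inner ℝ p y : ℝ) + sSup (polarWSet C F p) * F y ≤ 0) := by
  obtain ⟨y₁, hy₁, hFy₁⟩ := hFpos
  have hW : ∀ p ∈ polarConeSet C,
      (polarWSet C F p).Nonempty ∧ BddAbove (polarWSet C F p) :=
    fun p hp => ⟨⟨0, zero_mem_polarWSet hp⟩, bddAbove_polarWSet hy₁ hFy₁⟩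
  refine ⟨hW, fun y hy p hp => ?_⟩
  obtain ⟨hne, hbdd⟩ := hW p hp
  exact ((isClosed_polarWSet C F p).csSup_mem hne hbdd).2 y hy

/-- Reverse Cauchy–Schwarz inequality: for every `p` in the polar cone, the defining set
of `F^o p` is nonempty and bounded above, and `⟪p, y⟫ + F^o p * F y ≤ 0` for all
`y ∈ C`, `p ∈ C^o`. -/
theorem reverse_cauchy_schwarz
    {V : Type*} [NormedAddCommGroup V] [InnerProductSpace ℝ V] [FiniteDimensional ℝ V]
    (C : Set V) (hne : C.Nonempty) (hconv : Convex ℝ C) (h0 : (0:V) ∉ C)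
    (hcone : ∀ (s : ℝ) (y : V), 0 < s → y ∈ C → s • y ∈ C)
    (hclosed : IsClosed (C ∪ {0}))
    (hint : (interior (C ∪ {0})).Nonempty)
    (F : V → ℝ)
    (hFnn : ∀ y ∈ C, 0 ≤ F y)
    (hFhom : ∀ (s : ℝ) (y : V), 0 < s → y ∈ C → F (s • y) = s * F y)
    (hFconc : ∀ y ∈ C, ∀ w ∈ C, ∀ t : ℝ, t ∈ Set.Icc (0:ℝ) 1 →
      t * F y + (1 - t) * F w ≤ F (t • y + (1 - t) • w))
    (hFpos : ∃ y₁ ∈ C, 0 < F y₁) :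
    (∀ p ∈ polarConeSet C, (polarWSet C F p).Nonempty ∧ BddAbove (polarWSet C F p)) ∧
    (∀ y ∈ C, ∀ p ∈ polarConeSet C,
      (inner ℝ p y : ℝ) + sSup (polarWSet C F p) * F y ≤ 0) :=
  reverse_cauchy_schwarz_general C F hFpos
end

section
/- Let V be a finite-dimensional real inner product space, C ⊆ V a proper cone and F a Finsler function on C. Then for every p ∈ C^o one has F^o p = sInf {(-⟪p, y⟫) / F y | y ∈ C ∧ 0 < F y}. Moreover, if F is upper semicontinuous on C and ⟪p, y⟫ < 0 for every y ∈ C, then the infimum is attained: there exists y ∈ C with 0 < F y and -⟪p, y⟫ = F^o p * F y. -/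
/-- The polar Finsler function `F^o`. -/
noncomputable def polarFinsler {V : Type*} [NormedAddCommGroup V] [InnerProductSpace ℝ V]
    (C : Set V) (F : V → ℝ) (p : V) : ℝ :=
  sSup (polarWSet C F p)


/-!
Because `F ≥ 0` on `C`, a weight `w ≥ 0` satisfies `⟪p, y⟫ + w F y ≤ 0` on `C` exactly when
`w ≤ -⟪p, y⟫ / F y` whenever `F y > 0`, so the set defining `F^o p` is the interval
`[0, inf_y -⟪p, y⟫ / F y]`. For attainment, the ratio is invariant under positive scaling, so
it is enough to maximize `F` on the slice `C ∩ {⟪p, ·⟫ = -1}`. That slice is compact: on the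
unit sphere of the closed cone `C ∪ {0}` the function `-⟪p, ·⟫` is bounded below by some
`m > 0`, whence `‖y‖ ≤ 1 / m` on the slice. An upper semicontinuous `F` attains its maximum
on it.
-/

open Set

section ConeSlice

variable {V : Type*} [NormedAddCommGroup V] [NormedSpace ℝ V] {C : Set V}

lemma exists_pos_mul_norm_le_neg_of_cone [ProperSpace V]
    (hcone : ∀ (s : ℝ) (y : V), 0 < s → y ∈ C → s • y ∈ C) (hclosed : IsClosed (C ∪ {0}))
    {ℓ : V →L[ℝ] ℝ} (hneg : ∀ y ∈ C, ℓ y < 0) :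
    ∃ m > 0, ∀ y ∈ C, m * ‖y‖ ≤ -ℓ y := by
  set S := (C ∪ {0}) ∩ Metric.sphere (0 : V) 1
  have hS : IsCompact S :=
    (isCompact_sphere (0 : V) 1).of_isClosed_subset (hclosed.inter Metric.isClosed_sphere)
      inter_subset_right
  have hSC : S ⊆ C := by
    rintro u ⟨hu | rfl, hu1⟩
    · exact hu
    · simp at hu1
  obtain ⟨m, hm, hmS⟩ :=
    hS.exists_forall_le' (ℓ.continuous.neg.continuousOn) (fun u hu => neg_pos.2 (hneg u (hSC hu)))
  refine ⟨m, hm, fun y hy => ?_⟩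
  have hy0 : 0 < ‖y‖ := norm_pos_iff.2 fun h => (hneg y hy).ne (by simp [h])
  have hu : ‖y‖⁻¹ • y ∈ S :=
    ⟨Or.inl (hcone _ y (inv_pos.2 hy0) hy), by simp [norm_smul, hy0.ne']⟩
  have hmu := hmS _ hu
  rw [Pi.neg_apply, map_smul, smul_eq_mul, ← mul_neg, le_inv_mul_iff₀ hy0] at hmu
  linarith

lemma isCompact_cone_slice [ProperSpace V]
    (hcone : ∀ (s : ℝ) (y : V), 0 < s → y ∈ C → s • y ∈ C) (hclosed : IsClosed (C ∪ {0}))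
    {ℓ : V →L[ℝ] ℝ} (hneg : ∀ y ∈ C, ℓ y < 0) :
    IsCompact {y ∈ C | ℓ y = -1} := by
  obtain ⟨m, hm, hmC⟩ := exists_pos_mul_norm_le_neg_of_cone hcone hclosed hneg
  have hslice : {y ∈ C | ℓ y = -1} = (C ∪ {0}) ∩ ℓ ⁻¹' {-1} := by
    ext y
    constructor
    · exact fun ⟨hy, hℓ⟩ => ⟨Or.inl hy, hℓ⟩
    · rintro ⟨hy | rfl, hℓ⟩
      · exact ⟨hy, hℓ⟩
      · norm_num at hℓ
  refine (isCompact_closedBall (0 : V) m⁻¹).of_isClosed_subset ?_ ?_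
  · rw [hslice]
    exact hclosed.inter (isClosed_singleton.preimage ℓ.continuous)
  · rintro y ⟨hy, hℓ⟩
    have hnorm := hmC y hy
    rw [hℓ, neg_neg, ← le_div_iff₀' hm, one_div] at hnorm
    simpa using hnorm

end ConeSlice

section PolarFinsler

variable {V : Type*} [NormedAddCommGroup V] [InnerProductSpace ℝ V] {C : Set V} {F : V → ℝ}
  {p : V}

def polarRatioSet (C : Set V) (F : V → ℝ) (p : V) : Set ℝ :=
  {r : ℝ | ∃ y ∈ C, 0 < F y ∧ r = (-(inner ℝ p y : ℝ)) / F y}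

lemma polarRatioSet_nonempty (hFpos : ∃ y ∈ C, 0 < F y) : (polarRatioSet C F p).Nonempty :=
  let ⟨y, hy, hFy⟩ := hFpos
  ⟨_, y, hy, hFy, rfl⟩

lemma nonneg_of_mem_polarRatioSet (hp : ∀ y ∈ C, (inner ℝ p y : ℝ) ≤ 0) {r : ℝ}
    (hr : r ∈ polarRatioSet C F p) : 0 ≤ r := by
  obtain ⟨y, hy, hFy, rfl⟩ := hr
  exact div_nonneg (neg_nonneg.2 (hp y hy)) hFy.le

lemma polarWSet_eq_Icc (hFnn : ∀ y ∈ C, 0 ≤ F y) (hp : ∀ y ∈ C, (inner ℝ p y : ℝ) ≤ 0)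
    (hFpos : ∃ y ∈ C, 0 < F y) :
    polarWSet C F p = Icc 0 (sInf (polarRatioSet C F p)) := by
  ext w
  refine and_congr_right fun _ => ?_
  rw [le_csInf_iff ⟨0, fun _ => nonneg_of_mem_polarRatioSet hp⟩ (polarRatioSet_nonempty hFpos)]
  constructor
  · rintro hw _ ⟨y, hy, hFy, rfl⟩
    rw [le_div_iff₀ hFy]
    linarith [hw y hy]
  · intro hw y hy
    rcases (hFnn y hy).eq_or_lt with hFy | hFy
    · simpa [← hFy] using hp y hy
    · have hwy := hw _ ⟨y, hy, hFy, rfl⟩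
      rw [le_div_iff₀ hFy] at hwy
      linarith

lemma polarFinsler_eq_sInf_polarRatioSet (hFnn : ∀ y ∈ C, 0 ≤ F y)
    (hp : ∀ y ∈ C, (inner ℝ p y : ℝ) ≤ 0) (hFpos : ∃ y ∈ C, 0 < F y) :
    polarFinsler C F p = sInf (polarRatioSet C F p) := by
  rw [polarFinsler, polarWSet_eq_Icc hFnn hp hFpos,
    csSup_Icc (le_csInf (polarRatioSet_nonempty hFpos) fun _ => nonneg_of_mem_polarRatioSet hp)]

lemma neg_inner_div_smul_eq (hFhom : ∀ (s : ℝ) (y : V), 0 < s → y ∈ C → F (s • y) = s * F y)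
    {s : ℝ} (hs : 0 < s) {y : V} (hy : y ∈ C) :
    -(inner ℝ p (s • y) : ℝ) / F (s • y) = -(inner ℝ p y : ℝ) / F y := by
  rw [hFhom s y hs hy, real_inner_smul_right, ← mul_neg, mul_div_mul_left _ _ hs.ne']

lemma exists_isLeast_polarRatioSet [ProperSpace V]
    (hcone : ∀ (s : ℝ) (y : V), 0 < s → y ∈ C → s • y ∈ C) (hclosed : IsClosed (C ∪ {0}))
    (hFhom : ∀ (s : ℝ) (y : V), 0 < s → y ∈ C → F (s • y) = s * F y)
    (hFpos : ∃ y ∈ C, 0 < F y) (husc : UpperSemicontinuousOn F C)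
    (hneg : ∀ y ∈ C, (inner ℝ p y : ℝ) < 0) :
    ∃ y ∈ C, 0 < F y ∧ IsLeast (polarRatioSet C F p) (-(inner ℝ p y : ℝ) / F y) := by
  set K := {y ∈ C | innerSL ℝ p y = -1}
  have hK : IsCompact K := isCompact_cone_slice hcone hclosed (by simpa using hneg)
  have hscale : ∀ y ∈ C, 0 < (-(inner ℝ p y : ℝ))⁻¹ := fun y hy =>
    inv_pos.2 (neg_pos.2 (hneg y hy))
  have hnormalize : ∀ y ∈ C, (-(inner ℝ p y : ℝ))⁻¹ • y ∈ K := fun y hy =>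
    ⟨hcone _ y (hscale y hy) hy, by simp [real_inner_smul_right, (hneg y hy).ne]⟩
  have hFnormalize : ∀ y ∈ C, 0 < F y → 0 < F ((-(inner ℝ p y : ℝ))⁻¹ • y) := fun y hy hFy => by
    rw [hFhom _ y (hscale y hy) hy]
    exact mul_pos (hscale y hy) hFy
  have hinner_K : ∀ z ∈ K, (inner ℝ p z : ℝ) = -1 := fun z hz => by simpa using hz.2
  obtain ⟨y₁, hy₁, hFy₁⟩ := hFpos
  obtain ⟨y₀, hy₀, hmax⟩ :=
    (husc.mono (sep_subset _ _)).exists_isMaxOn ⟨_, hnormalize y₁ hy₁⟩ hK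
  have hFy₀ : 0 < F y₀ := (hFnormalize y₁ hy₁ hFy₁).trans_le (hmax (hnormalize y₁ hy₁))
  refine ⟨y₀, hy₀.1, hFy₀, ⟨y₀, hy₀.1, hFy₀, rfl⟩, ?_⟩
  rintro _ ⟨y, hy, hFy, rfl⟩
  rw [← neg_inner_div_smul_eq hFhom (hscale y hy) hy, hinner_K y₀ hy₀,
    hinner_K _ (hnormalize y hy), neg_neg]
  exact one_div_le_one_div_of_le (hFnormalize y hy hFy) (hmax (hnormalize y hy))

end PolarFinsler

theorem polarFinsler_eq_sInf_and_attained_general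
    {V : Type*} [NormedAddCommGroup V] [InnerProductSpace ℝ V] [FiniteDimensional ℝ V]
    (C : Set V)
    (hcone : ∀ (s : ℝ) (y : V), 0 < s → y ∈ C → s • y ∈ C)
    (hclosed : IsClosed (C ∪ {0}))
    (F : V → ℝ)
    (hFnn : ∀ y ∈ C, 0 ≤ F y)
    (hFhom : ∀ (s : ℝ) (y : V), 0 < s → y ∈ C → F (s • y) = s * F y)
    (hFpos : ∃ y₁ ∈ C, 0 < F y₁) :
    (∀ p ∈ polarConeSet C,
      polarFinsler C F p =
        sInf {r : ℝ | ∃ y ∈ C, 0 < F y ∧ r = (-(inner ℝ p y : ℝ)) / F y}) ∧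
    (UpperSemicontinuousOn F C →
      ∀ p ∈ polarConeSet C, (∀ y ∈ C, (inner ℝ p y : ℝ) < 0) →
        ∃ y ∈ C, 0 < F y ∧ -(inner ℝ p y : ℝ) = polarFinsler C F p * F y) := by
  have hinf : ∀ p ∈ polarConeSet C, polarFinsler C F p = sInf (polarRatioSet C F p) :=
    fun p hp => polarFinsler_eq_sInf_polarRatioSet hFnn hp.2 hFpos
  refine ⟨hinf, fun husc p hp hneg => ?_⟩
  obtain ⟨y, hy, hFy, hleast⟩ :=
    exists_isLeast_polarRatioSet hcone hclosed hFhom hFpos husc hneg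
  exact ⟨y, hy, hFy, by rw [hinf p hp, hleast.csInf_eq, div_mul_cancel₀ _ hFy.ne']⟩

/-- `F^o p` is the infimum of `-⟪p, y⟫ / F y` over `y ∈ C` with `F y > 0`, and for
upper semicontinuous `F` and `p` with `⟪p, y⟫ < 0` on all of `C` the infimum is
attained. -/
theorem polarFinsler_eq_sInf_and_attained
    {V : Type*} [NormedAddCommGroup V] [InnerProductSpace ℝ V] [FiniteDimensional ℝ V]
    (C : Set V) (hne : C.Nonempty) (hconv : Convex ℝ C) (h0 : (0:V) ∉ C)
    (hcone : ∀ (s : ℝ) (y : V), 0 < s → y ∈ C → s • y ∈ C)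
    (hclosed : IsClosed (C ∪ {0}))
    (hint : (interior (C ∪ {0})).Nonempty)
    (F : V → ℝ)
    (hFnn : ∀ y ∈ C, 0 ≤ F y)
    (hFhom : ∀ (s : ℝ) (y : V), 0 < s → y ∈ C → F (s • y) = s * F y)
    (hFconc : ∀ y ∈ C, ∀ w ∈ C, ∀ t : ℝ, t ∈ Set.Icc (0:ℝ) 1 →
      t * F y + (1 - t) * F w ≤ F (t • y + (1 - t) • w))
    (hFpos : ∃ y₁ ∈ C, 0 < F y₁) :
    (∀ p ∈ polarConeSet C,
      polarFinsler C F p =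
        sInf {r : ℝ | ∃ y ∈ C, 0 < F y ∧ r = (-(inner ℝ p y : ℝ)) / F y}) ∧
    (UpperSemicontinuousOn F C →
      ∀ p ∈ polarConeSet C, (∀ y ∈ C, (inner ℝ p y : ℝ) < 0) →
        ∃ y ∈ C, 0 < F y ∧ -(inner ℝ p y : ℝ) = polarFinsler C F p * F y) :=
  polarFinsler_eq_sInf_and_attained_general C hcone hclosed F hFnn hFhom hFpos
end

section
/- Let V be a finite-dimensional real normed space, let C₁, C₂ ⊆ V be proper cones with C₁ ⊆ interior (C₂ ∪ {0}), and let ℓ : V → ℝ be a continuous linear functional with 0 < ℓ y for every y ∈ C₂. Set C̃ᵢ := Cᵢ ∩ {v | ℓ v = 1} for i = 1, 2, and for reals w₁, w₂ with 0 < w₁, 0 < w₂ and w₁ + w₂ = 1 define C := {s • (w₁ • c₁ + w₂ • c₂) | 0 < s, c₁ ∈ C̃₁, c₂ ∈ C̃₂}. Then C is a proper cone, C₁ ⊆ interior (C ∪ {0}), and C ⊆ interior (C₂ ∪ {0}). -/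
open Pointwise




section Aux
variable {V : Type*} [NormedAddCommGroup V] [NormedSpace ℝ V]

lemma smul_mem_interior_coneZero {C : Set V}
    (hscale : ∀ (s : ℝ) (y : V), 0 < s → y ∈ C → s • y ∈ C)
    {s : ℝ} (hs : 0 < s) {x : V} (hx : x ∈ interior (C ∪ {0})) :
    s • x ∈ interior (C ∪ {0}) := by
  have hmap : s • interior (C ∪ {0}) ⊆ interior (C ∪ {0}) := by
    apply interior_maximal
    · rintro z ⟨y, hy, rfl⟩
      rcases interior_subset hy with h | h
      · exact Or.inl (hscale s y hs h)
      · simp [Set.mem_singleton_iff.mp h]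
    · rw [← Set.image_smul]
      exact (isOpenMap_smul₀ (ne_of_gt hs)) _ isOpen_interior
  exact hmap (Set.smul_mem_smul_set hx)

lemma coneZero_convex {C : Set V} (hconv : Convex ℝ C)
    (hscale : ∀ (s : ℝ) (y : V), 0 < s → y ∈ C → s • y ∈ C) :
    Convex ℝ (C ∪ {0}) := by
  intro x hx y hy a b ha hb hab
  rcases hx with hx | hx
  · rcases hy with hy | hy
    · exact Or.inl (hconv hx hy ha hb hab)
    · simp only [Set.mem_singleton_iff] at hy
      subst hy
      rcases ha.eq_or_lt with h | h
      · right; simp only [Set.mem_singleton_iff]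
        rw [← h, zero_smul, smul_zero, add_zero]
      · left; simpa using hscale a x h hx
  · simp only [Set.mem_singleton_iff] at hx
    subst hx
    rcases hy with hy | hy
    · rcases hb.eq_or_lt with h | h
      · right; simp only [Set.mem_singleton_iff]
        rw [← h, zero_smul, smul_zero, add_zero]
      · left; simpa using hscale b y h hy
    · simp only [Set.mem_singleton_iff] at hy
      subst hy
      right; simp

lemma sectionCompact [FiniteDimensional ℝ V] {C : Set V} (h : IsClosed (C ∪ {0}))
    (hscale : ∀ (s : ℝ) (y : V), 0 < s → y ∈ C → s • y ∈ C)
    (ℓ : V →L[ℝ] ℝ) (hℓ : ∀ y ∈ C, 0 < ℓ y) :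
    IsCompact (C ∩ {u | ℓ u = 1}) := by
  have hset : C ∩ {u | ℓ u = 1} = (C ∪ {0}) ∩ {u | ℓ u = 1} := by
    ext x
    constructor
    · rintro ⟨h1, h2⟩; exact ⟨Or.inl h1, h2⟩
    · rintro ⟨h1 | h1, h2⟩
      · exact ⟨h1, h2⟩
      · simp only [Set.mem_singleton_iff] at h1
        subst h1
        simp only [Set.mem_setOf_eq, map_zero] at h2
        norm_num at h2
  have hclosed : IsClosed (C ∩ {u | ℓ u = 1}) := by
    rw [hset]
    exact h.inter (isClosed_eq ℓ.continuous continuous_const)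
  by_cases hne : (C ∩ {u | ℓ u = 1}).Nonempty
  · obtain ⟨x₀, hx₀C, hx₀ℓ⟩ := hne
    have hx₀ne : x₀ ≠ 0 := by
      intro h0; rw [h0] at hx₀ℓ; simp only [Set.mem_setOf_eq, map_zero] at hx₀ℓ; norm_num at hx₀ℓ
    have hx₀n : (0:ℝ) < ‖x₀‖ := norm_pos_iff.mpr hx₀ne
    set D := (C ∪ {0}) ∩ Metric.sphere (0:V) 1 with hD
    have hDcomp : IsCompact D := (isCompact_sphere (0:V) 1).inter_left h
    have hDne : D.Nonempty := by
      refine ⟨‖x₀‖⁻¹ • x₀, Or.inl (hscale _ _ (by positivity) hx₀C), ?_⟩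
      simp [norm_smul, abs_of_pos (show (0:ℝ) < ‖x₀‖⁻¹ by positivity),
        inv_mul_cancel₀ hx₀n.ne']
    obtain ⟨d, hdD, hdmin⟩ := hDcomp.exists_isMinOn hDne ℓ.continuous.continuousOn
    have hdC : d ∈ C := by
      rcases hdD.1 with h1 | h1
      · exact h1
      · exfalso
        have := hdD.2
        simp only [Set.mem_singleton_iff] at h1
        rw [h1] at this
        simp at this
    have hdpos : 0 < ℓ d := hℓ d hdC
    apply IsCompact.of_isClosed_subset (isCompact_closedBall (0:V) (ℓ d)⁻¹) hclosed
    rintro x ⟨hxC, hxℓ⟩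
    simp only [Set.mem_setOf_eq] at hxℓ
    have hxne : x ≠ 0 := by
      intro h0; rw [h0] at hxℓ; simp at hxℓ
    have hxn : (0:ℝ) < ‖x‖ := norm_pos_iff.mpr hxne
    have hmem : ‖x‖⁻¹ • x ∈ D := by
      refine ⟨Or.inl (hscale _ _ (by positivity) hxC), ?_⟩
      simp [norm_smul, abs_of_pos (show (0:ℝ) < ‖x‖⁻¹ by positivity),
        inv_mul_cancel₀ hxn.ne']
    have hge : ℓ d ≤ ℓ (‖x‖⁻¹ • x) := hdmin hmem
    rw [map_smul] at hge
    simp only [smul_eq_mul, hxℓ, mul_one] at hge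
    rw [Metric.mem_closedBall, dist_zero_right]
    rw [le_inv_comm₀ hdpos hxn] at hge
    exact hge
  · rw [Set.not_nonempty_iff_eq_empty] at hne
    rw [hne]; exact isCompact_empty

end Aux


def IsProperCone {V : Type*} [NormedAddCommGroup V] [NormedSpace ℝ V] (C : Set V) : Prop :=
  C.Nonempty ∧ Convex ℝ C ∧ (0:V) ∉ C ∧
    (∀ (s : ℝ) (y : V), 0 < s → y ∈ C → s • y ∈ C) ∧
    IsClosed (C ∪ {0}) ∧ (interior (C ∪ {0})).Nonempty

/-- The strict convex combination, relative to a hyperplane section, of proper cones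
`C₁ < C₂` is a proper cone `C` with `C₁ < C < C₂`. -/
theorem strict_convex_combination_of_cones
    {V : Type*} [NormedAddCommGroup V] [NormedSpace ℝ V] [FiniteDimensional ℝ V]
    (C₁ C₂ : Set V) (hC₁ : IsProperCone C₁) (hC₂ : IsProperCone C₂)
    (hsub : C₁ ⊆ interior (C₂ ∪ {0}))
    (ℓ : V →L[ℝ] ℝ) (hℓ : ∀ y ∈ C₂, 0 < ℓ y)
    (w₁ w₂ : ℝ) (hw₁ : 0 < w₁) (hw₂ : 0 < w₂) (hw : w₁ + w₂ = 1)
    (C : Set V)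
    (hC : C = {v : V | ∃ s : ℝ, 0 < s ∧
      ∃ c₁ ∈ C₁ ∩ {u : V | ℓ u = 1}, ∃ c₂ ∈ C₂ ∩ {u : V | ℓ u = 1},
        v = s • (w₁ • c₁ + w₂ • c₂)}) :
    IsProperCone C ∧ C₁ ⊆ interior (C ∪ {0}) ∧ C ⊆ interior (C₂ ∪ {0}) := by
  obtain ⟨hne₁, hcv₁, h0₁, hsc₁, hcl₁, hint₁⟩ := hC₁
  obtain ⟨hne₂, hcv₂, h0₂, hsc₂, hcl₂, hint₂⟩ := hC₂
  -- C₁ ⊆ C₂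
  have hC₁sub₂ : C₁ ⊆ C₂ := by
    intro x hx
    rcases interior_subset (hsub hx) with h | h
    · exact h
    · simp only [Set.mem_singleton_iff] at h
      exact absurd (h ▸ hx) h0₁
  have hℓ₁ : ∀ y ∈ C₁, 0 < ℓ y := fun y hy => hℓ y (hC₁sub₂ hy)
  -- the sections
  set T₁ : Set V := C₁ ∩ {u : V | ℓ u = 1} with hT₁
  set T₂ : Set V := C₂ ∩ {u : V | ℓ u = 1} with hT₂
  have hT₂comp : IsCompact T₂ := sectionCompact hcl₂ hsc₂ ℓ hℓ
  have hT₁closed : IsClosed T₁ := by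
    have hset : T₁ = (C₁ ∪ {0}) ∩ {u | ℓ u = 1} := by
      ext x
      constructor
      · rintro ⟨h1, h2⟩; exact ⟨Or.inl h1, h2⟩
      · rintro ⟨h1 | h1, h2⟩
        · exact ⟨h1, h2⟩
        · simp only [Set.mem_singleton_iff] at h1
          subst h1
          simp only [Set.mem_setOf_eq, map_zero] at h2
          norm_num at h2
    rw [hset]
    exact hcl₁.inter (isClosed_eq ℓ.continuous continuous_const)
  have hT₁sub : T₁ ⊆ T₂ := fun x hx => ⟨hC₁sub₂ hx.1, hx.2⟩
  have hT₁comp : IsCompact T₁ := hT₂comp.of_isClosed_subset hT₁closed hT₁sub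
  have hT₁conv : Convex ℝ T₁ := by
    intro x hx y hy a b ha hb hab
    refine ⟨hcv₁ hx.1 hy.1 ha hb hab, ?_⟩
    have h1 : ℓ x = 1 := hx.2
    have h2 : ℓ y = 1 := hy.2
    simp only [Set.mem_setOf_eq, map_add, map_smul, smul_eq_mul, h1, h2, mul_one]
    exact hab
  have hT₂conv : Convex ℝ T₂ := by
    intro x hx y hy a b ha hb hab
    refine ⟨hcv₂ hx.1 hy.1 ha hb hab, ?_⟩
    have h1 : ℓ x = 1 := hx.2
    have h2 : ℓ y = 1 := hy.2
    simp only [Set.mem_setOf_eq, map_add, map_smul, smul_eq_mul, h1, h2, mul_one]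
    exact hab
  -- the compact convex base K
  set K : Set V := w₁ • T₁ + w₂ • T₂ with hKdef
  have memK : ∀ v : V, v ∈ K ↔ ∃ c₁ ∈ T₁, ∃ c₂ ∈ T₂, v = w₁ • c₁ + w₂ • c₂ := by
    intro v
    constructor
    · rintro ⟨a, ⟨c₁, hc₁, rfl⟩, b, ⟨c₂, hc₂, rfl⟩, rfl⟩
      exact ⟨c₁, hc₁, c₂, hc₂, rfl⟩
    · rintro ⟨c₁, hc₁, c₂, hc₂, rfl⟩
      exact ⟨w₁ • c₁, ⟨c₁, hc₁, rfl⟩, w₂ • c₂, ⟨c₂, hc₂, rfl⟩, rfl⟩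
  have hKcomp : IsCompact K := (hT₁comp.smul w₁).add (hT₂comp.smul w₂)
  have hKconv : Convex ℝ K := (hT₁conv.smul w₁).add (hT₂conv.smul w₂)
  have hℓK : ∀ k ∈ K, ℓ k = 1 := by
    intro k hk
    obtain ⟨c₁, hc₁, c₂, hc₂, rfl⟩ := (memK k).mp hk
    have h1 : ℓ c₁ = 1 := hc₁.2
    have h2 : ℓ c₂ = 1 := hc₂.2
    simp [map_add, map_smul, h1, h2, hw]
  -- C in terms of K
  have hCK : C = {v : V | ∃ s : ℝ, 0 < s ∧ ∃ k ∈ K, v = s • k} := by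
    rw [hC]
    ext v
    simp only [Set.mem_setOf_eq]
    constructor
    · rintro ⟨s, hs, c₁, hc₁, c₂, hc₂, rfl⟩
      exact ⟨s, hs, w₁ • c₁ + w₂ • c₂, (memK _).mpr ⟨c₁, hc₁, c₂, hc₂, rfl⟩, rfl⟩
    · rintro ⟨s, hs, k, hk, rfl⟩
      obtain ⟨c₁, hc₁, c₂, hc₂, rfl⟩ := (memK k).mp hk
      exact ⟨s, hs, c₁, hc₁, c₂, hc₂, rfl⟩
  -- decomposition of elements of C
  have hCdecomp : ∀ v ∈ C, 0 < ℓ v ∧ ∃ k ∈ K, v = (ℓ v) • k := by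
    intro v hv
    rw [hCK] at hv
    obtain ⟨s, hs, k, hk, rfl⟩ := hv
    have hℓv : ℓ (s • k) = s := by
      rw [map_smul, smul_eq_mul, hℓK k hk, mul_one]
    rw [hℓv]
    exact ⟨hs, k, hk, rfl⟩
  -- a point of K
  have hT₁ne : T₁.Nonempty := by
    obtain ⟨x, hx⟩ := hne₁
    have hlx : 0 < ℓ x := hℓ₁ x hx
    refine ⟨(ℓ x)⁻¹ • x, hsc₁ _ _ (by positivity) hx, ?_⟩
    simp only [Set.mem_setOf_eq, map_smul, smul_eq_mul]
    exact inv_mul_cancel₀ hlx.ne'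
  have hT₂ne : T₂.Nonempty := by
    obtain ⟨x, hx⟩ := hne₂
    have hlx : 0 < ℓ x := hℓ x hx
    refine ⟨(ℓ x)⁻¹ • x, hsc₂ _ _ (by positivity) hx, ?_⟩
    simp only [Set.mem_setOf_eq, map_smul, smul_eq_mul]
    exact inv_mul_cancel₀ hlx.ne'
  obtain ⟨e₁, he₁⟩ := hT₁ne
  obtain ⟨e₂, he₂⟩ := hT₂ne
  have hk₀ : w₁ • e₁ + w₂ • e₂ ∈ K := (memK _).mpr ⟨e₁, he₁, e₂, he₂, rfl⟩
  set k₀ : V := w₁ • e₁ + w₂ • e₂ with hk₀def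
  -- pieces of IsProperCone C
  have hCne : C.Nonempty := by
    refine ⟨k₀, ?_⟩
    rw [hCK]
    exact ⟨1, one_pos, k₀, hk₀, (one_smul ℝ k₀).symm⟩
  have hCscale : ∀ (s : ℝ) (y : V), 0 < s → y ∈ C → s • y ∈ C := by
    intro s y hs hy
    rw [hCK] at hy ⊢
    obtain ⟨t, ht, k, hk, rfl⟩ := hy
    exact ⟨s * t, by positivity, k, hk, smul_smul s t k⟩
  have hC0 : (0:V) ∉ C := by
    intro h
    have := (hCdecomp 0 h).1
    simp at this
  have hCconv : Convex ℝ C := by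
    intro x hx y hy a b ha hb hab
    rw [hCK] at hx hy ⊢
    obtain ⟨s, hs, k, hk, rfl⟩ := hx
    obtain ⟨t, ht, k', hk', rfl⟩ := hy
    rcases ha.eq_or_lt with h | h
    · have hb1 : b = 1 := by linarith
      refine ⟨t, ht, k', hk', ?_⟩
      rw [← h, hb1, zero_smul, one_smul, zero_add]
    rcases hb.eq_or_lt with h' | h'
    · have ha1 : a = 1 := by linarith
      refine ⟨s, hs, k, hk, ?_⟩
      rw [← h', ha1, zero_smul, one_smul, add_zero]
    have hr : 0 < a * s + b * t := by positivity
    refine ⟨a * s + b * t, hr,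
      (a * s / (a * s + b * t)) • k + (b * t / (a * s + b * t)) • k', ?_, ?_⟩
    · refine hKconv hk hk' (by positivity) (by positivity) ?_
      field_simp
    · rw [smul_add, smul_smul, smul_smul, smul_smul, smul_smul]
      congr 1 <;> · congr 1; field_simp
  have hCclosed : IsClosed (C ∪ {0}) := by
    apply IsSeqClosed.isClosed
    intro x p hx hxp
    have hrep : ∀ n, ∃ k ∈ K, x n = (ℓ (x n)) • k := by
      intro n
      rcases hx n with h | h
      · obtain ⟨_, k, hk, hv⟩ := hCdecomp _ h
        exact ⟨k, hk, hv⟩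
      · simp only [Set.mem_singleton_iff] at h
        exact ⟨k₀, hk₀, by rw [h]; simp⟩
    choose k hkK hkx using hrep
    obtain ⟨q, hqK, φ, hφ, hkq⟩ := hKcomp.tendsto_subseq hkK
    have hx' : Filter.Tendsto (fun n => x (φ n)) Filter.atTop (nhds p) :=
      hxp.comp hφ.tendsto_atTop
    have hℓp : Filter.Tendsto (fun n => ℓ (x (φ n))) Filter.atTop (nhds (ℓ p)) :=
      (ℓ.continuous.tendsto p).comp hx'
    have hlim : Filter.Tendsto (fun n => (ℓ (x (φ n))) • k (φ n)) Filter.atTop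
        (nhds ((ℓ p) • q)) := hℓp.smul hkq
    have heq : p = (ℓ p) • q := by
      refine tendsto_nhds_unique (hx'.congr (fun n => hkx (φ n))) hlim
    have hℓnn : 0 ≤ ℓ p := by
      refine le_of_tendsto_of_tendsto' tendsto_const_nhds hℓp (fun n => ?_)
      rcases hx (φ n) with h | h
      · exact (hCdecomp _ h).1.le
      · simp only [Set.mem_singleton_iff] at h
        rw [h]; simp
    rcases hℓnn.eq_or_lt with h | h
    · right
      simp only [Set.mem_singleton_iff]
      rw [heq, ← h, zero_smul]
    · left
      rw [hCK]
      exact ⟨ℓ p, h, q, hqK, heq⟩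
  -- C₁ ⊆ interior (C ∪ {0})
  have hmid : C₁ ⊆ interior (C ∪ {0}) := by
    intro x hx
    have hlx : 0 < ℓ x := hℓ₁ x hx
    set z : V := (ℓ x)⁻¹ • x with hzdef
    have hzC₁ : z ∈ C₁ := hsc₁ _ _ (by positivity) hx
    have hℓz : ℓ z = 1 := by
      rw [hzdef, map_smul, smul_eq_mul, inv_mul_cancel₀ hlx.ne']
    have hzint : z ∈ interior (C ∪ {0}) := by
      have hCz : C ∈ nhds z := by
        have hfz : z + w₂⁻¹ • ((ℓ z)⁻¹ • z - z) = z := by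
          rw [hℓz]
          simp
        have hfc : ContinuousAt (fun v : V => z + w₂⁻¹ • ((ℓ v)⁻¹ • v - z)) z := by
          have h1 : ContinuousAt (fun v : V => (ℓ v)⁻¹ • v) z :=
            ((ℓ.continuous.continuousAt).inv₀ (by rw [hℓz]; norm_num)).smul continuousAt_id
          exact continuousAt_const.add ((h1.sub continuousAt_const).const_smul w₂⁻¹)
        have hU : interior (C₂ ∪ {0}) ∈ nhds z := isOpen_interior.mem_nhds (hsub hzC₁)
        have h1 : (fun v : V => z + w₂⁻¹ • ((ℓ v)⁻¹ • v - z)) ⁻¹' (interior (C₂ ∪ {0}))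
            ∈ nhds z := hfc.preimage_mem_nhds (by rw [hfz]; exact hU)
        have h2 : {v : V | 0 < ℓ v} ∈ nhds z := by
          refine (isOpen_lt continuous_const ℓ.continuous).mem_nhds ?_
          simp only [Set.mem_setOf_eq, hℓz]
          norm_num
        refine Filter.mem_of_superset (Filter.inter_mem h1 h2) ?_
        rintro v ⟨hfv, hv⟩
        simp only [Set.mem_setOf_eq] at hv
        simp only [Set.mem_preimage] at hfv
        have hℓc₂ : ℓ (z + w₂⁻¹ • ((ℓ v)⁻¹ • v - z)) = 1 := by
          simp only [map_add, map_smul, map_sub, smul_eq_mul, hℓz]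
          rw [inv_mul_cancel₀ hv.ne']
          ring
        have hc₂C₂ : z + w₂⁻¹ • ((ℓ v)⁻¹ • v - z) ∈ C₂ := by
          rcases interior_subset hfv with h | h
          · exact h
          · simp only [Set.mem_singleton_iff] at h
            rw [h] at hℓc₂
            simp at hℓc₂
        rw [hC]
        refine ⟨ℓ v, hv, z, ⟨hzC₁, hℓz⟩, z + w₂⁻¹ • ((ℓ v)⁻¹ • v - z), ⟨hc₂C₂, hℓc₂⟩, ?_⟩
        have hcomb : w₁ • z + w₂ • (z + w₂⁻¹ • ((ℓ v)⁻¹ • v - z)) = (ℓ v)⁻¹ • v := by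
          have hws : w₂ • (w₂⁻¹ • ((ℓ v)⁻¹ • v - z)) = (ℓ v)⁻¹ • v - z :=
            smul_inv_smul₀ hw₂.ne' _
          rw [smul_add w₂ z, hws, ← add_assoc, ← add_smul w₁ w₂ z, hw, one_smul]
          abel
        rw [hcomb, smul_smul, mul_inv_cancel₀ hv.ne', one_smul]
      exact interior_mono Set.subset_union_left (mem_interior_iff_mem_nhds.mpr hCz)
    have hxz : x = (ℓ x) • z := by
      rw [hzdef, smul_smul, mul_inv_cancel₀ hlx.ne', one_smul]
    rw [hxz]
    exact smul_mem_interior_coneZero hCscale hlx hzint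
  -- C ⊆ interior (C₂ ∪ {0})
  have hupper : C ⊆ interior (C₂ ∪ {0}) := by
    intro v hv
    rw [hC] at hv
    obtain ⟨s, hs, c₁, hc₁, c₂, hc₂, rfl⟩ := hv
    have h1 : w₁ • c₁ + w₂ • c₂ ∈ interior (C₂ ∪ {0}) :=
      (coneZero_convex hcv₂ hsc₂).combo_interior_self_mem_interior
        (hsub hc₁.1) (Or.inl hc₂.1) hw₁ hw₂.le hw
    exact smul_mem_interior_coneZero hsc₂ hs h1
  exact ⟨⟨hCne, hCconv, hC0, hCscale, hCclosed, ⟨_, hmid hne₁.choose_spec⟩⟩,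
    hmid, hupper⟩
end

section
/- Let X be a topological space, E a finite-dimensional real normed vector space, and F : X → Set E a set-valued map each of whose values F x is convex. If F is lower semicontinuous, then for every x ∈ X and every compact set K ⊆ interior (F x) there exists a neighborhood N of x such that K ⊆ interior (F w) for every w ∈ N. Conversely, if every value F x is closed with interior (F x) nonempty, and for every x and every compact K ⊆ interior (F x) there is a neighborhood N of x with K ⊆ interior (F w) for all w ∈ N, then F is lower semicontinuous. -/
/-!
Around an interior point `k` of the convex set `F x` sits a simplex whose closed hull contains a
ball `ball k r`. Lower semicontinuity lets us move every vertex by less than `r / 2` into `F w`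
for `w` near `x`; the perturbed hull lies in `F w` by convexity, and a separation argument shows
it still contains `ball k (r / 2)`. Compactness of `K` turns these local statements into a single
neighbourhood of `x`. Conversely, an open set meeting a convex set with nonempty interior meets
its interior, and the hypothesis applied to a single interior point gives lower semicontinuity.
-/

/-- Lower semicontinuity of a set-valued map. -/
def LowerSemicontinuousSetMap {X E : Type*} [TopologicalSpace X] [TopologicalSpace E]
    (F : X → Set E) : Prop :=
  ∀ x : X, ∀ V : Set E, IsOpen V → (F x ∩ V).Nonempty →
    {w : X | (F w ∩ V).Nonempty} ∈ nhds x

open Set Metric Filter Topology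

section

variable {E : Type*} [NormedAddCommGroup E] [NormedSpace ℝ E]

/-- A functional separating `u` from `C` exceeds its value at `u` by almost `r ‖f‖` somewhere on
the ball, but by less than `s ‖f‖` anywhere on the thickening. -/
theorem Convex.mem_of_ball_subset_thickening {C : Set E} (hC : Convex ℝ C) (hCc : IsClosed C)
    {u : E} {r s : ℝ} (hr : 0 < r) (hsr : s < r) (h : ball u r ⊆ Metric.thickening s C) :
    u ∈ C := by
  by_contra hu
  obtain ⟨f, a, hfC, hfu⟩ := geometric_hahn_banach_closed_point hC hCc hu
  have hball : ∀ z ∈ ball u r, f z < a + s * ‖f‖ := by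
    intro z hz
    obtain ⟨c, hc, hzc⟩ := mem_thickening_iff.1 (h hz)
    have hdev : f (z - c) ≤ s * ‖f‖ := calc
      f (z - c) ≤ ‖f‖ * ‖z - c‖ := (le_abs_self _).trans (f.le_opNorm _)
      _ ≤ ‖f‖ * s := by gcongr; exact (dist_eq_norm z c ▸ hzc).le
      _ = s * ‖f‖ := mul_comm _ _
    calc f z = f c + f (z - c) := by rw [← map_add, add_sub_cancel]
      _ < a + s * ‖f‖ := add_lt_add_of_lt_of_le (hfC c hc) hdev
  have hdir : ∀ w ∈ ball (0 : E) 1, ‖f w‖ ≤ s * ‖f‖ / r := by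
    have hone : ∀ w ∈ ball (0 : E) 1, r * f w < s * ‖f‖ := by
      intro w hw
      have hw' : u + r • w ∈ ball u r := by
        rw [mem_ball_zero_iff] at hw
        simpa [norm_smul, abs_of_pos hr] using mul_lt_of_lt_one_right hr hw
      have := hball _ hw'
      rw [map_add, map_smul, smul_eq_mul] at this
      linarith
    intro w hw
    have hpos := hone w hw
    have hneg := hone (-w) (by simpa using hw)
    rw [map_neg] at hneg
    rw [Real.norm_eq_abs, abs_le, neg_le, le_div_iff₀ hr, le_div_iff₀ hr]
    constructor <;> linarith
  have hnorm : sSup ((fun w => ‖f w‖) '' ball (0 : E) 1) ≤ s * ‖f‖ / r :=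
    csSup_le ((nonempty_ball.2 one_pos).image _) (forall_mem_image.2 hdir)
  rw [f.sSup_unit_ball_eq_norm, le_div_iff₀ hr] at hnorm
  have hf : ‖f‖ = 0 := le_antisymm (by nlinarith) (norm_nonneg f)
  have hcentre := hball u (mem_ball_self hr)
  rw [hf, mul_zero, add_zero] at hcentre
  linarith

theorem Convex.ball_subset_of_ball_subset_thickening {C : Set E} (hC : Convex ℝ C)
    (hCc : IsClosed C) {k : E} {r s : ℝ} (hs : 0 ≤ s) (h : ball k r ⊆ Metric.thickening s C) :
    ball k (r - s) ⊆ C := fun u hu =>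
  have hu : dist u k < r - s := hu
  hC.mem_of_ball_subset_thickening hCc (r := r - dist u k) (by linarith) (by linarith)
    ((ball_subset_ball' (by linarith)).trans h)

theorem convexHull_subset_thickening_convexHull {S T : Set E} {ε : ℝ}
    (h : S ⊆ thickening ε T) : convexHull ℝ S ⊆ thickening ε (convexHull ℝ T) :=
  convexHull_min (h.trans (thickening_subset_of_subset ε (subset_convexHull ℝ T)))
    ((convex_convexHull ℝ T).thickening ε)

theorem LowerSemicontinuousSetMap.eventually_mem_interior [FiniteDimensional ℝ E]
    {X : Type*} [TopologicalSpace X] {F : X → Set E} (hF : LowerSemicontinuousSetMap F)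
    (hconv : ∀ x, Convex ℝ (F x)) {x : X} {k : E} (hk : k ∈ interior (F x)) :
    ∀ᶠ p : X × E in 𝓝 (x, k), p.2 ∈ interior (F p.1) := by
  obtain ⟨b, hkb, hbF⟩ := exists_mem_interior_convexHull_affineBasis (isOpen_interior.mem_nhds hk)
  obtain ⟨r, hr, hkr⟩ := isOpen_iff.1 isOpen_interior k hkb
  have hnear : ∀ᶠ w in 𝓝 x, ∀ i, (F w ∩ ball (b i) (r / 2)).Nonempty :=
    eventually_all.2 fun i => hF x _ isOpen_ball
      ⟨b i, interior_subset (hbF (subset_convexHull ℝ _ (mem_range_self i))),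
        mem_ball_self (half_pos hr)⟩
  have hballs : ∀ᶠ w in 𝓝 x, ball k (r / 2) ⊆ interior (F w) := by
    filter_upwards [hnear] with w hw
    choose y hyF hyb using hw
    have hvertices : range b ⊆ thickening (r / 2) (range y) := by
      rintro _ ⟨i, rfl⟩
      exact mem_thickening_iff.2 ⟨y i, mem_range_self i, by rw [dist_comm]; exact hyb i⟩
    have hhull : ball k (r - r / 2) ⊆ convexHull ℝ (range y) :=
      (convex_convexHull ℝ _).ball_subset_of_ball_subset_thickening
        ((finite_range y).isClosed_convexHull (𝕜 := ℝ)) (half_pos hr).le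
        (hkr.trans (interior_subset.trans (convexHull_subset_thickening_convexHull hvertices)))
    rw [sub_half] at hhull
    exact interior_maximal (hhull.trans (convexHull_min (range_subset_iff.2 hyF) (hconv w)))
      isOpen_ball
  rw [nhds_prod_eq]
  exact (hballs.prod_mk (ball_mem_nhds k (half_pos hr))).mono fun p hp => hp.1 hp.2

end

/-- A convex-valued lower semicontinuous multifunction locally contains any compact
subset of the interior of one of its values in the interiors of nearby values; the
converse holds for closed values with nonempty interior. -/
theorem lsc_convex_valued_maps
    {X E : Type*} [TopologicalSpace X] [NormedAddCommGroup E] [NormedSpace ℝ E]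
    [FiniteDimensional ℝ E]
    (F : X → Set E) (hconv : ∀ x, Convex ℝ (F x)) :
    (LowerSemicontinuousSetMap F →
      ∀ x : X, ∀ K : Set E, IsCompact K → K ⊆ interior (F x) →
        ∃ N ∈ nhds x, ∀ w ∈ N, K ⊆ interior (F w)) ∧
    ((∀ x, IsClosed (F x)) → (∀ x, (interior (F x)).Nonempty) →
      (∀ x : X, ∀ K : Set E, IsCompact K → K ⊆ interior (F x) →
        ∃ N ∈ nhds x, ∀ w ∈ N, K ⊆ interior (F w)) →
      LowerSemicontinuousSetMap F) := by
  constructor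
  · intro hF x K hK hKF
    exact (hK.eventually_forall_of_forall_eventually fun k hk =>
      hF.eventually_mem_interior hconv (hKF hk)).exists_mem
  · intro _ hint hK x V hV ⟨y, hyF, hyV⟩
    have hy : y ∈ closure (interior (F x)) := by
      rw [(hconv x).closure_interior_eq_closure_of_nonempty_interior (hint x)]
      exact subset_closure hyF
    obtain ⟨p, hpV, hp⟩ := mem_closure_iff.1 hy V hV hyV
    obtain ⟨N, hN, hNp⟩ := hK x {p} isCompact_singleton (singleton_subset_iff.2 hp)
    exact mem_of_superset hN fun w hw => ⟨p, interior_subset (hNp w hw rfl), hpV⟩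
end

section
/- Let X be a topological space, E a finite-dimensional real normed vector space, and C ⊆ X × E a set such that every fiber C_x := {y ∈ E | (x, y) ∈ C} is convex and such that the set-valued map x ↦ C_x is lower semicontinuous. Then for every x ∈ X, {y ∈ E | (x, y) ∈ interior C} = interior (C_x), where interior C is taken in X × E and interior (C_x) is taken in E. -/
/-!
Choose an affine simplex inside `C_x` whose interior contains `y`. By lower semicontinuity, for
`w` near `x` the fiber `C_w` contains a point near each vertex, hence by convexity the simplex
spanned by these points. A separation argument shows that perturbing the vertices by less than `ε`
shrinks a ball around `y` contained in the simplex by at most `ε`, so a fixed ball around `y` lies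
in `C_w` for all `w` near `x`.
-/

open Metric Set Filter Topology

section NormedSpace

variable {E : Type*} [NormedAddCommGroup E] [NormedSpace ℝ E]

theorem StrongDual.exists_lt_apply_of_lt_opNorm (f : StrongDual ℝ E) {r : ℝ} (hr : r < ‖f‖) :
    ∃ v : E, ‖v‖ < 1 ∧ r < f v := by
  obtain ⟨v, hv, hrv⟩ := ContinuousLinearMap.exists_lt_apply_of_lt_opNorm f hr
  rcases lt_abs.1 (Real.norm_eq_abs _ ▸ hrv) with h | h
  · exact ⟨v, hv, h⟩
  · exact ⟨-v, by rwa [norm_neg], by rwa [map_neg]⟩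

theorem convexHull_range_subset_thickening {ι : Type*} {p z : ι → E} {ε : ℝ}
    (h : ∀ i, dist (z i) (p i) < ε) :
    convexHull ℝ (range p) ⊆ thickening ε (convexHull ℝ (range z)) :=
  convexHull_min
    (range_subset_iff.2 fun i =>
      mem_thickening_iff.2 ⟨z i, subset_convexHull ℝ _ (mem_range_self i), dist_comm (z i) _ ▸ h i⟩)
    ((convex_convexHull ℝ _).thickening ε)

theorem Convex.ball_subset_of_ball_add_subset_thickening {K : Set E} (hK : Convex ℝ K)
    (hKc : IsClosed K) {y : E} {δ ε : ℝ} (hε : 0 ≤ ε)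
    (h : ball y (δ + ε) ⊆ Metric.thickening ε K) : ball y δ ⊆ K := by
  intro u hu
  by_contra huK
  obtain ⟨f, c, hfK, hcu⟩ := geometric_hahn_banach_closed_point hK hKc huK
  have hu' : dist u y < δ := hu
  obtain ⟨k₀, hk₀, -⟩ := mem_thickening_iff.1 (h (ball_subset_ball (by linarith) hu))
  have hf : 0 < ‖f‖ := norm_pos_iff.2 fun hf0 => by
    simpa [hf0] using (hfK k₀ hk₀).trans hcu
  -- Move from `u` by almost `δ - dist u y + ε` in a direction where `f` grows almost at rate `‖f‖`.
  set ρ := δ - dist u y + ε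
  have hρ : ε < ρ := by linarith
  have hρ0 : 0 < ρ := by linarith
  obtain ⟨g, hg, hfg⟩ := StrongDual.exists_lt_apply_of_lt_opNorm f
    (r := ε / ρ * ‖f‖) (mul_lt_of_lt_one_left hf ((div_lt_one hρ0).2 hρ))
  have hv : ‖ρ • g‖ < ρ := by
    rw [norm_smul, Real.norm_of_nonneg hρ0.le]
    exact mul_lt_of_lt_one_right hρ0 hg
  have hfv : ε * ‖f‖ < f (ρ • g) := by
    rw [map_smul, smul_eq_mul]
    calc ε * ‖f‖ = ρ * (ε / ρ * ‖f‖) := by rw [← mul_assoc, mul_div_cancel₀ _ hρ0.ne']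
      _ < ρ * f g := mul_lt_mul_of_pos_left hfg hρ0
  have hball : u + ρ • g ∈ ball y (δ + ε) := by
    rw [mem_ball]
    calc dist (u + ρ • g) y ≤ dist u y + ‖ρ • g‖ := by
          rw [dist_eq_norm, dist_eq_norm, add_sub_right_comm]; exact norm_add_le _ _
      _ < δ + ε := by linarith
  obtain ⟨k, hk, hdist⟩ := mem_thickening_iff.1 (h hball)
  have hfk : f (u + ρ • g) - f k ≤ ‖f‖ * ε := by
    rw [← map_sub]
    exact (le_abs_self _).trans
      ((f.le_opNorm _).trans (by rw [← dist_eq_norm]; gcongr))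
  have := hfK k hk
  rw [map_add] at hfk
  linarith

theorem ball_subset_convexHull_of_forall_dist_lt {ι : Type*} [Finite ι] {p z : ι → E}
    {y : E} {δ ε : ℝ} (hε : 0 ≤ ε) (hp : ball y (δ + ε) ⊆ convexHull ℝ (range p))
    (hz : ∀ i, dist (z i) (p i) < ε) : ball y δ ⊆ convexHull ℝ (range z) :=
  (convex_convexHull ℝ _).ball_subset_of_ball_add_subset_thickening
    ((finite_range z).isCompact_convexHull ℝ).isClosed hε
    (hp.trans (convexHull_range_subset_thickening hz))

end NormedSpace

theorem LowerSemicontinuousSetMap.mem_nhds_prod_of_mem_interior {X E : Type*}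
    [TopologicalSpace X] [NormedAddCommGroup E] [NormedSpace ℝ E] [FiniteDimensional ℝ E]
    {F : X → Set E} (hF : LowerSemicontinuousSetMap F) (hconv : ∀ x, Convex ℝ (F x))
    {x : X} {y : E} (hy : y ∈ interior (F x)) : {q : X × E | q.2 ∈ F q.1} ∈ 𝓝 (x, y) := by
  obtain ⟨b, hyb, hbF⟩ :=
    exists_mem_interior_convexHull_affineBasis (mem_interior_iff_mem_nhds.1 hy)
  obtain ⟨δ, hδ, hδb⟩ := Metric.mem_nhds_iff.1 (mem_interior_iff_mem_nhds.1 hyb)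
  have hδ2 : 0 < δ / 2 := half_pos hδ
  have hW : ∀ᶠ w in 𝓝 x, ∀ i, (F w ∩ ball (b i) (δ / 2)).Nonempty :=
    eventually_all.2 fun i => hF x _ isOpen_ball
      ⟨b i, hbF (subset_convexHull ℝ _ (mem_range_self i)), mem_ball_self hδ2⟩
  rw [nhds_prod_eq]
  filter_upwards [prod_mem_prod hW (ball_mem_nhds y hδ2)]
  rintro ⟨w, v⟩ ⟨hw, hv⟩
  choose z hzF hzb using hw
  have hvz : v ∈ convexHull ℝ (range z) :=
    ball_subset_convexHull_of_forall_dist_lt hδ2.le (by rwa [add_halves]) hzb hv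
  exact convexHull_min (range_subset_iff.2 hzF) (hconv w) hvz

/-- For a convex-valued lower semicontinuous bundle `C ⊆ X × E`, the fiber of the
interior equals the interior of the fiber. -/
theorem fiber_interior_eq_interior_fiber
    {X E : Type*} [TopologicalSpace X] [NormedAddCommGroup E] [NormedSpace ℝ E]
    [FiniteDimensional ℝ E]
    (C : Set (X × E))
    (hconv : ∀ x : X, Convex ℝ {y : E | (x, y) ∈ C})
    (hlsc : LowerSemicontinuousSetMap (fun x : X => {y : E | (x, y) ∈ C})) :
    ∀ x : X, {y : E | (x, y) ∈ interior C} = interior {y : E | (x, y) ∈ C} := by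
  intro x
  refine (preimage_interior_subset_interior_preimage (Continuous.prodMk_right x)).antisymm
    fun y hy => ?_
  exact mem_interior_iff_mem_nhds.2 (hlsc.mem_nhds_prod_of_mem_interior hconv hy)
end

section
/- Let E be a real normed vector space, K ⊆ E a subset, and x : ℝ → E a curve such that x t ∈ K for every t ∈ [0, 1]. If x has derivative v at 0 from the right, i.e. HasDerivWithinAt x v (Set.Ici 0) 0, then v belongs to the tangent cone of K at x 0, i.e. v ∈ tangentConeAt ℝ K (x 0). -/
open Set

theorem sub_mem_tangentConeAt_Icc {a b : ℝ} (hab : a ≤ b) :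
    b - a ∈ tangentConeAt ℝ (Icc a b) a :=
  mem_tangentConeAt_of_segment_subset (segment_eq_Icc hab).subset

theorem HasDerivWithinAt.mem_tangentConeAt_of_mapsTo {𝕜 F : Type*} [NontriviallyNormedField 𝕜]
    [NormedAddCommGroup F] [NormedSpace 𝕜 F] {f : 𝕜 → F} {f' : F} {s : Set 𝕜} {t : Set F}
    {a : 𝕜} (hf : HasDerivWithinAt f f' s a) (hst : MapsTo f s t)
    (h1 : (1 : 𝕜) ∈ tangentConeAt 𝕜 s a) : f' ∈ tangentConeAt 𝕜 t (f a) := by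
  have hf' := hf.hasFDerivWithinAt.mapsTo_tangent_cone h1
  rw [ContinuousLinearMap.toSpanSingleton_apply_one] at hf'
  exact tangentConeAt_mono hst.image_subset hf'

/-- If a curve lies in `K` on `[0, 1]` and has a right derivative `v` at `0`, then `v`
belongs to the Severi–Bouligand tangent (contingent) cone of `K` at `x 0`. -/
theorem velocity_mem_tangentCone
    {E : Type*} [NormedAddCommGroup E] [NormedSpace ℝ E]
    (K : Set E) (x : ℝ → E) (hx : ∀ t ∈ Set.Icc (0:ℝ) 1, x t ∈ K)
    (v : E) (hderiv : HasDerivWithinAt x v (Set.Ici 0) 0) :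
    v ∈ tangentConeAt ℝ K (x 0) := by
  have h1 : (1 : ℝ) ∈ tangentConeAt ℝ (Icc 0 1) 0 := by
    simpa using sub_mem_tangentConeAt_Icc zero_le_one
  exact (hderiv.mono Icc_subset_Ici_self).mem_tangentConeAt_of_mapsTo hx h1
end
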